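/- arXiv:1409.5116 — 2 statements merged into one kernel-verified Lean document; each statement's English description precedes it below -/
import Mathlib

section
/- If G is a 4-critical graph of Ore-degree at most 7 and G is an Ore-composition of two 4-critical graphs G1 and G2, then both G1 and G2 have Ore-degree at most 7. -/
open SimpleGraph

/-- The degree of a vertex, as the cardinality of its neighbor set. -/
noncomputable def deg {V : Type} (G : SimpleGraph V) (v : V) : ℕ :=
  Nat.card (G.neighborSet v)

/-- The number of edges of a graph. -/
noncomputable def numEdges {V : Type} (G : SimpleGraph V) : ℕ :=
  Nat.card G.edgeSet

/-- The independence number of a graph. -/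
noncomputable def indepNum {V : Type} (G : SimpleGraph V) : ℕ :=
  sSup {n | ∃ s : Set V, (∀ u ∈ s, ∀ v ∈ s, ¬ G.Adj u v) ∧ s.ncard = n}

/-- The set of vertices of degree at most three. -/
noncomputable def D3set {V : Type} (G : SimpleGraph V) : Set V :=
  {v | deg G v ≤ 3}

/-- `D3(G)`: the subgraph induced by the vertices of degree at most three. -/
noncomputable def D3 {V : Type} (G : SimpleGraph V) : SimpleGraph (D3set G) :=
  G.induce (D3set G)

/-- The potential of a graph: `p(G) = 4.8 |V(G)| - 3 |E(G)| + 0.6 α(D3(G))`. -/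
noncomputable def potential {V : Type} (G : SimpleGraph V) : ℚ :=
  (24/5 : ℚ) * Nat.card V - 3 * numEdges G + (3/5 : ℚ) * _root_.indepNum (D3 G)

/-- The potential of a subset `R` of the vertices of `G`:
`p(R) = 4.8 |R| - 3 |E(G[R])| + 0.6 α(G[D3(G) ∩ R])`. -/
noncomputable def potentialOf {V : Type} (G : SimpleGraph V) (R : Set V) : ℚ :=
  (24/5 : ℚ) * R.ncard - 3 * numEdges (G.induce R)
    + (3/5 : ℚ) * _root_.indepNum (G.induce (D3set G ∩ R))

/-- A graph is `k`-critical if it is not `(k-1)`-colorable but every proper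
subgraph is `(k-1)`-colorable. -/
def IsKCritical {V : Type} (G : SimpleGraph V) (k : ℕ) : Prop :=
  ¬ G.Colorable (k - 1) ∧ ∀ H : SimpleGraph V, H ≤ G → H ≠ G → H.Colorable (k - 1)

/-- A graph has Ore-degree at most `d` if `d(u) + d(v) ≤ d` for every edge `uv`. -/
def OreDegreeAtMost {V : Type} (G : SimpleGraph V) (d : ℕ) : Prop :=
  ∀ u v, G.Adj u v → deg G u + deg G v ≤ d

/-- The Ore-composition of `G1` (edge-side, with replaced edge `xy`) and `G2`
(split-side, with split vertex `z` whose incident edges going to `A` are attached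
to `x` and the remaining ones to `y`). -/
def oreCompose {V1 V2 : Type} (G1 : SimpleGraph V1) (G2 : SimpleGraph V2)
    (x y : V1) (z : V2) (A : Set V2) :
    SimpleGraph (V1 ⊕ {v : V2 // v ≠ z}) :=
  SimpleGraph.fromRel (fun a b =>
    match a, b with
    | Sum.inl u, Sum.inl v =>
        G1.Adj u v ∧ ¬((u = x ∧ v = y) ∨ (u = y ∧ v = x))
    | Sum.inl u, Sum.inr v =>
        (u = x ∧ G2.Adj z v.1 ∧ v.1 ∈ A) ∨ (u = y ∧ G2.Adj z v.1 ∧ v.1 ∉ A)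
    | Sum.inr _, Sum.inl _ => False
    | Sum.inr u, Sum.inr v => G2.Adj u.1 v.1)

/-- `G` is an Ore-composition of `G1` and `G2`: there are a replaced edge `xy` of
`G1`, a split vertex `z` of `G2`, and a splitting of the edges at `z` into two
nonempty parts, such that `G` is isomorphic to the resulting composition. -/
def IsOreComposition {V V1 V2 : Type} (G : SimpleGraph V)
    (G1 : SimpleGraph V1) (G2 : SimpleGraph V2) : Prop :=
  ∃ (x y : V1) (z : V2) (A : Set V2),
    G1.Adj x y ∧ (∃ p, G2.Adj z p ∧ p ∈ A) ∧ (∃ q, G2.Adj z q ∧ q ∉ A) ∧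
    Nonempty (G ≃g oreCompose G1 G2 x y z A)

/-- The family of `4`-Ore graphs: the smallest family of graphs containing `K4`
and closed under Ore-compositions. -/
inductive IsFourOre : ∀ {V : Type}, SimpleGraph V → Prop
  | k4 {V : Type} (G : SimpleGraph V) :
      Nonempty (G ≃g completeGraph (Fin 4)) → IsFourOre G
  | comp {V V1 V2 : Type} (G : SimpleGraph V)
      (G1 : SimpleGraph V1) (G2 : SimpleGraph V2) :
      IsFourOre G1 → IsFourOre G2 → IsOreComposition G G1 G2 → IsFourOre G

/-- The boundary of a set `R`: the vertices of `R` with a neighbor outside `R`. -/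
def boundary {V : Type} (G : SimpleGraph V) (R : Set V) : Set V :=
  {v | v ∈ R ∧ ∃ u, u ∉ R ∧ G.Adj v u}

/-- A proper subset `R` of the vertices with `|R| ≥ 2` is collapsible if in every
proper 3-coloring of `G[R]` all vertices of the boundary of `R` get the same color. -/
def Collapsible {V : Type} (G : SimpleGraph V) (R : Set V) : Prop :=
  R ≠ Set.univ ∧ 2 ≤ R.ncard ∧
  ∀ φ : V → Fin 3, (∀ u ∈ R, ∀ v ∈ R, G.Adj u v → φ u ≠ φ v) →
    ∀ u ∈ boundary G R, ∀ v ∈ boundary G R, φ u = φ v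

/-- The critical complement of a set `R`: identify the boundary of `R` to a single
vertex (the vertex `none`) and delete the rest of `R`. -/
def criticalComplement {V : Type} (G : SimpleGraph V) (R : Set V) :
    SimpleGraph (Option {v : V // v ∉ R}) :=
  SimpleGraph.fromRel (fun a b =>
    match a, b with
    | some u, some v => G.Adj u.1 v.1
    | some u, none => ∃ w ∈ boundary G R, G.Adj u.1 w
    | none, some _ => False
    | none, none => False)

/-- A nonempty proper subset `R` with boundary `S` is cocollapsible if every vertex
of `S` has exactly one neighbor outside `R`, and for every non-constant list of
forbidden colors on `S` there is a proper 3-coloring of `G[R]` avoiding them. -/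
def Cocollapsible {V : Type} (G : SimpleGraph V) (R : Set V) : Prop :=
  R.Nonempty ∧ R ≠ Set.univ ∧
  (∀ v ∈ boundary G R, ∃! u, u ∉ R ∧ G.Adj v u) ∧
  ∀ f : V → Fin 3,
    (∃ u ∈ boundary G R, ∃ v ∈ boundary G R, f u ≠ f v) →
    ∃ φ : V → Fin 3, (∀ u ∈ R, ∀ v ∈ R, G.Adj u v → φ u ≠ φ v) ∧
      ∀ v ∈ boundary G R, φ v ≠ f v

/-- A cocollapsible set is nontrivial if its complement has more than one vertex. -/
def NontrivialCocollapsible {V : Type} (G : SimpleGraph V) (R : Set V) : Prop :=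
  Cocollapsible G R ∧ 1 < (Rᶜ : Set V).ncard

/-- The graph `H` together with the (possibly new) edge `uv`. -/
def withEdge {W : Type} (H : SimpleGraph W) (u v : W) : SimpleGraph W :=
  H ⊔ SimpleGraph.fromEdgeSet {s(u, v)}

/-- A collapsible set `R` is tight if for any two distinct boundary vertices `u, v`
the graph `G[R] + uv` is `4`-critical. -/
def TightCollapsible {V : Type} (G : SimpleGraph V) (R : Set V) : Prop :=
  Collapsible G R ∧
  ∀ u (hu : u ∈ boundary G R) v (hv : v ∈ boundary G R), u ≠ v →
    IsKCritical (withEdge (G.induce R) ⟨u, hu.1⟩ ⟨v, hv.1⟩) 4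

/-- `s(H) = |E(H)| - |V(H)| + α(H)`. -/
noncomputable def sVal {V : Type} (H : SimpleGraph V) : ℤ :=
  (numEdges H : ℤ) - (Nat.card V : ℤ) + (_root_.indepNum H : ℤ)

/-- `H7`: the unique Ore-composition of two copies of `K4`. Vertices `0,1,2,3`
form the edge-side `K4` with replaced edge `01`; the split vertex of the second
`K4` on `{z,4,5,6}` is split so that `0` gets the edge to `4` and `1` gets the
edges to `5` and `6`. -/
def H7 : SimpleGraph (Fin 7) :=
  SimpleGraph.fromRel (fun a b =>
    ((a, b) : Fin 7 × Fin 7) ∈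
      ([(0, 2), (0, 3), (1, 2), (1, 3), (2, 3), (4, 5), (4, 6), (5, 6),
        (0, 4), (1, 5), (1, 6)] : List (Fin 7 × Fin 7)))

/-- A diamond in `G`: a subgraph isomorphic to `K4` minus an edge whose two
vertices of degree three within the subgraph (`w1` and `w2`) also have degree
three in `G`.  The vertices `e1` and `e2` are the ends of the diamond. -/
def IsDiamond {V : Type} (G : SimpleGraph V) (e1 e2 w1 w2 : V) : Prop :=
  e1 ≠ e2 ∧ e1 ≠ w1 ∧ e1 ≠ w2 ∧ e2 ≠ w1 ∧ e2 ≠ w2 ∧ w1 ≠ w2 ∧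
  G.Adj w1 w2 ∧ G.Adj e1 w1 ∧ G.Adj e1 w2 ∧ G.Adj e2 w1 ∧ G.Adj e2 w2 ∧
  deg G w1 = 3 ∧ deg G w2 = 3

/-- A triangle with a pendant edge. -/
def trianglePendant1 : SimpleGraph (Fin 4) :=
  SimpleGraph.fromRel (fun a b =>
    ((a, b) : Fin 4 × Fin 4) ∈ ([(0, 1), (1, 2), (2, 0), (0, 3)] : List (Fin 4 × Fin 4)))

/-- A triangle with a pendant path on two further vertices. -/
def trianglePendant2 : SimpleGraph (Fin 5) :=
  SimpleGraph.fromRel (fun a b =>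
    ((a, b) : Fin 5 × Fin 5) ∈
      ([(0, 1), (1, 2), (2, 0), (0, 3), (3, 4)] : List (Fin 5 × Fin 5)))

/-! In the composition, a vertex of `G1` other than `x, y` and a vertex of `G2` other than `z`
keep their degree, while `d(x) = d₁(x) - 1 + a` and `d(y) = d₁(y) - 1 + b`, where `a, b ≥ 1` are
the sizes of the two parts of the split and `a + b = d₂(z)`. As 4-critical graphs have minimum
degree 3, both `x` and `y` have a neighbor of degree at least 3 in `G`, so `d(x), d(y) ≤ 4`.
Hence `d₁(x) + d₁(y) = d(x) + d(y) + 2 - d₂(z) ≤ 7` and `b ≤ 2`, and for a neighbor `v` of `z`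
attached to `x` we get `d₂(z) + d₂(v) ≤ d(x) + d(v) ≤ 7`. Every other edge of `G1` or `G2` is an
edge of `G` whose ends have not lost degree. -/

theorem Set.ncard_eq_ncard_preimage_inl_add_ncard_preimage_inr {α β : Type*} [Finite α]
    [Finite β] (s : Set (α ⊕ β)) :
    s.ncard = (Sum.inl ⁻¹' s).ncard + (Sum.inr ⁻¹' s).ncard := by
  conv_lhs => rw [← Set.image_preimage_inl_union_image_preimage_inr s]
  rw [Set.ncard_union_eq Set.disjoint_image_inl_image_inr,
    Set.ncard_image_of_injective _ Sum.inl_injective,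
    Set.ncard_image_of_injective _ Sum.inr_injective]

theorem Set.ncard_preimage_val_of_notMem {α : Type*} {z : α} {s : Set α} (hz : z ∉ s) :
    (Subtype.val ⁻¹' s : Set {v : α // v ≠ z}).ncard = s.ncard :=
  Set.ncard_preimage_of_injective_subset_range Subtype.val_injective
    fun v hv => ⟨⟨v, fun h => hz (h ▸ hv)⟩, rfl⟩

lemma deg_eq_ncard {V : Type} (G : SimpleGraph V) (v : V) :
    deg G v = (G.neighborSet v).ncard := rfl

theorem SimpleGraph.Iso.deg_eq {V W : Type} {G : SimpleGraph V} {G' : SimpleGraph W}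
    (e : G ≃g G') (v : V) :
    deg G' (e v) = deg G v :=
  (Nat.card_congr (e.mapNeighborSet v)).symm

lemma OreDegreeAtMost.of_iso {V W : Type} {G : SimpleGraph V} {G' : SimpleGraph W} {d : ℕ}
    (h : OreDegreeAtMost G d) (e : G ≃g G') : OreDegreeAtMost G' d := by
  intro u v huv
  simpa only [Iso.deg_eq] using h _ _ (e.symm.map_adj_iff.2 huv)

lemma SimpleGraph.Colorable.of_deleteIncidenceSet {V : Type} [Finite V] {G : SimpleGraph V}
    {u : V} {n : ℕ} (h : (G.deleteIncidenceSet u).Colorable n) (hu : deg G u < n) :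
    G.Colorable n := by
  classical
  obtain ⟨C⟩ := h
  have hfree : C '' G.neighborSet u ≠ Set.univ := by
    intro huniv
    have := (Set.ncard_image_le (s := G.neighborSet u) (f := C) (Set.toFinite _)).trans_lt hu
    simp [huniv] at this
  obtain ⟨c, hc⟩ := (Set.ne_univ_iff_exists_notMem _).1 hfree
  refine ⟨Coloring.mk (Function.update C u c) fun {a b} hab => ?_⟩
  by_cases ha : a = u
  · subst ha
    rw [Function.update_self, Function.update_of_ne hab.ne.symm]
    exact fun h => hc ⟨b, hab, h.symm⟩
  by_cases hb : b = u
  · subst hb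
    rw [Function.update_self, Function.update_of_ne hab.ne]
    exact fun h => hc ⟨a, hab.symm, h⟩
  rw [Function.update_of_ne ha, Function.update_of_ne hb]
  exact C.valid (deleteIncidenceSet_adj.2 ⟨hab, ha, hb⟩)

lemma IsKCritical.le_deg {V : Type} [Finite V] {G : SimpleGraph V} {k : ℕ}
    (hG : IsKCritical G k) {u w : V} (huw : G.Adj u w) : k - 1 ≤ deg G u := by
  by_contra! hlt
  have hne : G.deleteIncidenceSet u ≠ G := fun h =>
    (deleteIncidenceSet_adj.1 (h.symm ▸ huw : (G.deleteIncidenceSet u).Adj u w)).2.1 rfl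
  exact hG.1 ((hG.2 _ (G.deleteIncidenceSet_le u) hne).of_deleteIncidenceSet hlt)

section OreComposition

variable {V1 V2 : Type} {G1 : SimpleGraph V1} {G2 : SimpleGraph V2} {x y : V1} {z : V2}
  {A : Set V2}

@[simp]
lemma oreCompose_adj_inl_inl {u v : V1} :
    (oreCompose G1 G2 x y z A).Adj (.inl u) (.inl v) ↔
      G1.Adj u v ∧ ¬((u = x ∧ v = y) ∨ (u = y ∧ v = x)) := by
  simp only [oreCompose, fromRel_adj]
  grind [G1.adj_comm, G1.ne_of_adj]

@[simp]
lemma oreCompose_adj_inl_inr {u : V1} {w : {v : V2 // v ≠ z}} :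
    (oreCompose G1 G2 x y z A).Adj (.inl u) (.inr w) ↔
      (u = x ∧ G2.Adj z w ∧ ↑w ∈ A) ∨ (u = y ∧ G2.Adj z w ∧ ↑w ∉ A) := by
  simp [oreCompose]

@[simp]
lemma oreCompose_adj_inr_inl {u : V1} {w : {v : V2 // v ≠ z}} :
    (oreCompose G1 G2 x y z A).Adj (.inr w) (.inl u) ↔
      (u = x ∧ G2.Adj z w ∧ ↑w ∈ A) ∨ (u = y ∧ G2.Adj z w ∧ ↑w ∉ A) := by
  rw [adj_comm, oreCompose_adj_inl_inr]

@[simp]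
lemma oreCompose_adj_inr_inr {u w : {v : V2 // v ≠ z}} :
    (oreCompose G1 G2 x y z A).Adj (.inr u) (.inr w) ↔ G2.Adj u w := by
  simp only [oreCompose, fromRel_adj]
  grind [G2.adj_comm, G2.ne_of_adj]

lemma oreCompose_comm : oreCompose G1 G2 x y z A = oreCompose G1 G2 y x z Aᶜ := by
  ext s t
  cases s <;> cases t <;> simp <;> tauto

variable [Finite V1] [Finite V2]

lemma deg_oreCompose_inl_of_ne {v : V1} (hvx : v ≠ x) (hvy : v ≠ y) :
    deg (oreCompose G1 G2 x y z A) (.inl v) = deg G1 v := by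
  rw [deg_eq_ncard, Set.ncard_eq_ncard_preimage_inl_add_ncard_preimage_inr]
  have hinl :
      Sum.inl ⁻¹' (oreCompose G1 G2 x y z A).neighborSet (.inl v) = G1.neighborSet v := by
    ext u; simp [hvx, hvy]
  have hinr : Sum.inr ⁻¹' (oreCompose G1 G2 x y z A).neighborSet (.inl v) = ∅ := by
    ext w; simp [hvx, hvy]
  rw [hinl, hinr, Set.ncard_empty, add_zero, deg_eq_ncard]

lemma deg_oreCompose_inl_left (hxy : G1.Adj x y) :
    deg (oreCompose G1 G2 x y z A) (.inl x) + 1 = deg G1 x + (G2.neighborSet z ∩ A).ncard := by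
  rw [deg_eq_ncard, Set.ncard_eq_ncard_preimage_inl_add_ncard_preimage_inr]
  have hinl : Sum.inl ⁻¹' (oreCompose G1 G2 x y z A).neighborSet (.inl x) =
      G1.neighborSet x \ {y} := by
    ext u; simp [hxy.ne]
  have hinr : Sum.inr ⁻¹' (oreCompose G1 G2 x y z A).neighborSet (.inl x) =
      Subtype.val ⁻¹' (G2.neighborSet z ∩ A) := by
    ext w; simp [hxy.ne]
  have hdel := Set.ncard_sdiff_singleton_add_one (s := G1.neighborSet x) hxy
  rw [hinl, hinr, Set.ncard_preimage_val_of_notMem fun h => h.1.ne rfl, deg_eq_ncard]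
  omega

lemma deg_oreCompose_inr (w : {v : V2 // v ≠ z}) :
    deg (oreCompose G1 G2 x y z A) (.inr w) = deg G2 w := by
  classical
  rw [deg_eq_ncard, Set.ncard_eq_ncard_preimage_inl_add_ncard_preimage_inr, deg_eq_ncard]
  have hinr : Sum.inr ⁻¹' (oreCompose G1 G2 x y z A).neighborSet (.inr w) =
      Subtype.val ⁻¹' (G2.neighborSet w \ {z}) := by
    ext u; simp [u.2]
  rw [hinr, Set.ncard_preimage_val_of_notMem fun h => h.2 rfl]
  by_cases hzw : G2.Adj z w
  · have hinl : Sum.inl ⁻¹' (oreCompose G1 G2 x y z A).neighborSet (.inr w) =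
        {if (w : V2) ∈ A then x else y} := by
      ext u; split_ifs <;> simp [*]
    rw [hinl, Set.ncard_singleton, add_comm,
      Set.ncard_sdiff_singleton_add_one (s := G2.neighborSet w) hzw.symm]
  · have hinl : Sum.inl ⁻¹' (oreCompose G1 G2 x y z A).neighborSet (.inr w) = ∅ := by
      ext u; simp [hzw]
    rw [hinl, Set.ncard_empty, zero_add, Set.sdiff_singleton_eq_self fun h => hzw h.symm]

lemma deg_oreCompose_inl_right (hxy : G1.Adj x y) :
    deg (oreCompose G1 G2 x y z A) (.inl y) + 1 = deg G1 y + (G2.neighborSet z \ A).ncard := by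
  rw [oreCompose_comm, deg_oreCompose_inl_left hxy.symm, Set.sdiff_eq]

variable {p q : V2}

lemma deg_left_add_ncard_le_five (h2 : IsKCritical G2 4) (hxy : G1.Adj x y) (hzp : G2.Adj z p)
    (hpA : p ∈ A) (hOre : OreDegreeAtMost (oreCompose G1 G2 x y z A) 7) :
    deg G1 x + (G2.neighborSet z ∩ A).ncard ≤ 5 := by
  have hxp := hOre (.inl x) (.inr ⟨p, hzp.ne.symm⟩) (by simp [hzp, hpA])
  have hp := h2.le_deg hzp.symm
  have hx := deg_oreCompose_inl_left (G2 := G2) (z := z) (A := A) hxy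
  rw [deg_oreCompose_inr] at hxp
  dsimp only at hxp
  omega

lemma deg_right_add_ncard_le_five (h2 : IsKCritical G2 4) (hxy : G1.Adj x y) (hzq : G2.Adj z q)
    (hqA : q ∉ A) (hOre : OreDegreeAtMost (oreCompose G1 G2 x y z A) 7) :
    deg G1 y + (G2.neighborSet z \ A).ncard ≤ 5 := by
  rw [oreCompose_comm] at hOre
  simpa [Set.sdiff_eq] using deg_left_add_ncard_le_five h2 hxy.symm hzq hqA hOre

lemma deg_le_deg_oreCompose_inl (hxy : G1.Adj x y) (hzp : G2.Adj z p) (hpA : p ∈ A)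
    (hzq : G2.Adj z q) (hqA : q ∉ A) (v : V1) :
    deg G1 v ≤ deg (oreCompose G1 G2 x y z A) (.inl v) := by
  by_cases hvx : v = x
  · have hx := deg_oreCompose_inl_left (G2 := G2) (z := z) (A := A) hxy
    have ha : 0 < (G2.neighborSet z ∩ A).ncard := (Set.ncard_pos).2 ⟨p, hzp, hpA⟩
    subst hvx
    omega
  by_cases hvy : v = y
  · have hy := deg_oreCompose_inl_right (G2 := G2) (z := z) (A := A) hxy
    have hb : 0 < (G2.neighborSet z \ A).ncard := (Set.ncard_pos).2 ⟨q, hzq, hqA⟩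
    subst hvy
    omega
  exact (deg_oreCompose_inl_of_ne hvx hvy).ge

theorem OreDegreeAtMost.of_oreCompose_left (h2 : IsKCritical G2 4) (hxy : G1.Adj x y)
    (hzp : G2.Adj z p) (hpA : p ∈ A) (hzq : G2.Adj z q) (hqA : q ∉ A)
    (hOre : OreDegreeAtMost (oreCompose G1 G2 x y z A) 7) : OreDegreeAtMost G1 7 := by
  intro u v huv
  by_cases hreplaced : (u = x ∧ v = y) ∨ (u = y ∧ v = x)
  · have hx := deg_left_add_ncard_le_five h2 hxy hzp hpA hOre
    have hy := deg_right_add_ncard_le_five h2 hxy hzq hqA hOre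
    have hz := h2.le_deg hzp
    have hsplit := Set.ncard_inter_add_ncard_sdiff_eq_ncard (G2.neighborSet z) A
    rw [← deg_eq_ncard] at hsplit
    rcases hreplaced with ⟨rfl, rfl⟩ | ⟨rfl, rfl⟩ <;> omega
  · have huv' := hOre _ _ (oreCompose_adj_inl_inl.2 ⟨huv, hreplaced⟩)
    have hu := deg_le_deg_oreCompose_inl hxy hzp hpA hzq hqA u
    have hv := deg_le_deg_oreCompose_inl hxy hzp hpA hzq hqA v
    omega

lemma deg_split_add_deg_le_seven (h1 : IsKCritical G1 4) (h2 : IsKCritical G2 4)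
    (hxy : G1.Adj x y) (hzp : G2.Adj z p) (hpA : p ∈ A) (hzq : G2.Adj z q) (hqA : q ∉ A)
    (hOre : OreDegreeAtMost (oreCompose G1 G2 x y z A) 7) {v : V2} (hzv : G2.Adj z v) :
    deg G2 z + deg G2 v ≤ 7 := by
  wlog hvA : v ∈ A generalizing x y A p q
  · rw [oreCompose_comm] at hOre
    exact this hxy.symm hzq hqA hzp (not_not.2 hpA) hOre hvA
  have hxv := hOre (.inl x) (.inr ⟨v, hzv.ne.symm⟩) (by simp [hzv, hvA])
  rw [deg_oreCompose_inr] at hxv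
  dsimp only at hxv
  have hx := deg_oreCompose_inl_left (G2 := G2) (z := z) (A := A) hxy
  have hy := deg_right_add_ncard_le_five h2 hxy hzq hqA hOre
  have hx3 := h1.le_deg hxy
  have hy3 := h1.le_deg hxy.symm
  have hsplit := Set.ncard_inter_add_ncard_sdiff_eq_ncard (G2.neighborSet z) A
  rw [← deg_eq_ncard] at hsplit
  omega

theorem OreDegreeAtMost.of_oreCompose_right (h1 : IsKCritical G1 4) (h2 : IsKCritical G2 4)
    (hxy : G1.Adj x y) (hzp : G2.Adj z p) (hpA : p ∈ A) (hzq : G2.Adj z q) (hqA : q ∉ A)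
    (hOre : OreDegreeAtMost (oreCompose G1 G2 x y z A) 7) : OreDegreeAtMost G2 7 := by
  intro u v huv
  by_cases huz : u = z
  · subst huz
    exact deg_split_add_deg_le_seven h1 h2 hxy hzp hpA hzq hqA hOre huv
  by_cases hvz : v = z
  · subst hvz
    rw [add_comm]
    exact deg_split_add_deg_le_seven h1 h2 hxy hzp hpA hzq hqA hOre huv.symm
  simpa only [deg_oreCompose_inr] using
    hOre (.inr ⟨u, huz⟩) (.inr ⟨v, hvz⟩) (oreCompose_adj_inr_inr.2 huv)

end OreComposition

theorem statement_3_general {V V1 V2 : Type} [Fintype V1] [Fintype V2]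
    (G : SimpleGraph V) (G1 : SimpleGraph V1) (G2 : SimpleGraph V2)
    (hOre : OreDegreeAtMost G 7)
    (h1 : IsKCritical G1 4) (h2 : IsKCritical G2 4)
    (hcomp : IsOreComposition G G1 G2) :
    OreDegreeAtMost G1 7 ∧ OreDegreeAtMost G2 7 := by
  obtain ⟨x, y, z, A, hxy, ⟨p, hzp, hpA⟩, ⟨q, hzq, hqA⟩, ⟨e⟩⟩ := hcomp
  have hOre' := hOre.of_iso e
  exact ⟨.of_oreCompose_left h2 hxy hzp hpA hzq hqA hOre',
    .of_oreCompose_right h1 h2 hxy hzp hpA hzq hqA hOre'⟩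

/-- If `G` is a `4`-critical graph of Ore-degree at most `7` and `G`
is an Ore-composition of two `4`-critical graphs `G1` and `G2`, then both `G1`
and `G2` have Ore-degree at most `7`. -/
theorem statement_3 {V V1 V2 : Type} [Fintype V] [Fintype V1] [Fintype V2]
    (G : SimpleGraph V) (G1 : SimpleGraph V1) (G2 : SimpleGraph V2)
    (hG : IsKCritical G 4) (hOre : OreDegreeAtMost G 7)
    (h1 : IsKCritical G1 4) (h2 : IsKCritical G2 4)
    (hcomp : IsOreComposition G G1 G2) :
    OreDegreeAtMost G1 7 ∧ OreDegreeAtMost G2 7 :=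
  statement_3_general G G1 G2 hOre h1 h2 hcomp
end

section
/- If R is a nontrivial cocollapsible subset of a 4-critical graph G, then V(G)∖R is a collapsible subset of G. -/
open SimpleGraph

/-! Given a 3-coloring of `G[V ∖ R]` that separates two boundary vertices, forbid on each boundary
vertex of `R` the color of its unique outer neighbor. These forbidden colors are not constant, so
cocollapsibility colors `G[R]` compatibly, and the two colorings glue to a 3-coloring of `G`,
which the 4-criticality of `G` rules out. -/

section Gluing

variable {V α : Type} {G : SimpleGraph V}

open Classical in
noncomputable def piecewiseColoring (R : Set V) (ψ φ : V → α)
    (hψ : ∀ u ∈ R, ∀ v ∈ R, G.Adj u v → ψ u ≠ ψ v)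
    (hφ : ∀ u ∈ Rᶜ, ∀ v ∈ Rᶜ, G.Adj u v → φ u ≠ φ v)
    (hcut : ∀ u ∈ R, ∀ v ∉ R, G.Adj u v → ψ u ≠ φ v) : G.Coloring α :=
  Coloring.mk (R.piecewise ψ φ) fun {a b} hab => by
    by_cases ha : a ∈ R <;> by_cases hb : b ∈ R <;>
      simp only [Set.piecewise_eq_of_mem, Set.piecewise_eq_of_notMem, ha, hb, not_false_eq_true]
    · exact hψ a ha b hb hab
    · exact hcut a ha b hb hab
    · exact (hcut b hb a ha hab.symm).symm
    · exact hφ a ha b hb hab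

end Gluing

section Boundary

variable {V : Type} {G : SimpleGraph V} {R : Set V}

theorem exists_mem_boundary_adj_of_mem_boundary_compl {u : V} (hu : u ∈ boundary G Rᶜ) :
    ∃ w ∈ boundary G R, G.Adj w u := by
  obtain ⟨huR, w, hw, hadj⟩ := hu
  rw [Set.mem_compl_iff, not_not] at hw
  exact ⟨w, ⟨hw, u, huR, hadj.symm⟩, hadj.symm⟩

theorem exists_boundary_color_eq_outer_neighbor {α : Type}
    (huniq : ∀ v ∈ boundary G R, ∃! u, u ∉ R ∧ G.Adj v u) (φ : V → α) :
    ∃ f : V → α, ∀ w ∈ boundary G R, ∀ a ∉ R, G.Adj w a → f w = φ a := by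
  choose! n hn using fun w hw => (huniq w hw).exists
  exact ⟨φ ∘ n, fun w hw a ha hadj => congrArg φ ((huniq w hw).unique (hn w hw) ⟨ha, hadj⟩)⟩

theorem colorable_three_of_cocollapsible (hR : Cocollapsible G R) {φ : V → Fin 3}
    (hφ : ∀ u ∈ Rᶜ, ∀ v ∈ Rᶜ, G.Adj u v → φ u ≠ φ v) {u v : V}
    (hu : u ∈ boundary G Rᶜ) (hv : v ∈ boundary G Rᶜ) (huv : φ u ≠ φ v) :
    G.Colorable 3 := by
  obtain ⟨-, -, huniq, havoid⟩ := hR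
  obtain ⟨f, hf⟩ := exists_boundary_color_eq_outer_neighbor huniq φ
  obtain ⟨w₁, hw₁, hw₁u⟩ := exists_mem_boundary_adj_of_mem_boundary_compl hu
  obtain ⟨w₂, hw₂, hw₂v⟩ := exists_mem_boundary_adj_of_mem_boundary_compl hv
  obtain ⟨ψ, hψ, hψf⟩ :=
    havoid f ⟨w₁, hw₁, w₂, hw₂, by rwa [hf w₁ hw₁ u hu.1 hw₁u, hf w₂ hw₂ v hv.1 hw₂v]⟩
  refine ⟨piecewiseColoring R ψ φ hψ hφ fun w hw a ha hadj => ?_⟩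
  have hwb : w ∈ boundary G R := ⟨hw, a, ha, hadj⟩
  exact hf w hwb a ha hadj ▸ hψf w hwb

end Boundary

theorem statement_13_general {V : Type} (G : SimpleGraph V)
    (hG : IsKCritical G 4) (R : Set V) (hR : NontrivialCocollapsible G R) :
    Collapsible G (Rᶜ : Set V) := by
  obtain ⟨hcoc, hcard⟩ := hR
  refine ⟨Set.compl_ne_univ.mpr hcoc.1, hcard, fun φ hφ u hu v hv => ?_⟩
  by_contra huv
  exact hG.1 (colorable_three_of_cocollapsible hcoc hφ hu hv huv)

/-- If `R` is a nontrivial cocollapsible subset of a `4`-critical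
graph `G`, then `V(G) ∖ R` is a collapsible subset of `G`. -/
theorem statement_13 {V : Type} [Fintype V] (G : SimpleGraph V)
    (hG : IsKCritical G 4) (R : Set V) (hR : NontrivialCocollapsible G R) :
    Collapsible G (Rᶜ : Set V) :=
  statement_13_general G hG R hR
end
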